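/- arXiv:math/0604449 — 3 statements merged into one kernel-verified Lean document; each statement's English description precedes it below -/
import Mathlib

section
/- The rational function f(x₁,x₂) = (1 − x₁x₂) / ((1 − x₁)(1 − x₂)(1 − q x₁² x₂²)) has Taylor series expansion f(x₁,x₂) = Σ_{k,l≥0} a_{kl} x₁^k x₂^l, where a_{kl} = min(q^{k/2}, q^{l/2}) if min(k,l) is even, and a_{kl} = 0 if min(k,l) is odd. -/
/-!
Write `g m = q^(m/2)` for even `m` and `g m = 0` for odd `m`; for `q ≥ 1` the coefficients are
`a_{kl} = g (min k l)`. Multiplying a coefficient array of the form `g (min k l)` by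
`(1 - x₁)(1 - x₂)` takes its mixed second difference, which vanishes off the diagonal; the result
is `(1 - x₁x₂) · ∑ g m (x₁x₂)^m`. Since `g 0 = 1`, `g 1 = 0` and `g (m + 2) = q g m`, the diagonal
series times `1 - q x₁²x₂²` is `1`.
-/

open MvPowerSeries Finsupp

namespace MvPowerSeries

variable {R : Type*}

noncomputable def coeff₂ [Semiring R] (f : MvPowerSeries (Fin 2) R) (k l : ℕ) : R :=
  coeff (single 0 k + single 1 l) f

lemma ext₂ [Semiring R] {f g : MvPowerSeries (Fin 2) R}
    (h : ∀ k l, coeff₂ f k l = coeff₂ g k l) : f = g := by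
  refine ext fun d => ?_
  have hd : d = single 0 (d 0) + single 1 (d 1) := by
    ext i; fin_cases i <;> simp
  rw [hd]
  exact h _ _

lemma coeff₂_one [Semiring R] (k l : ℕ) :
    coeff₂ (1 : MvPowerSeries (Fin 2) R) k l = if k = 0 ∧ l = 0 then 1 else 0 := by
  simp [coeff₂, coeff_one]

lemma coeff₂_mul_one_sub [CommRing R] (f : MvPowerSeries (Fin 2) R) (c : R) (a b k l : ℕ) :
    coeff₂ (f * (1 - C c * X 0 ^ a * X 1 ^ b)) k l =
      coeff₂ f k l - if a ≤ k ∧ b ≤ l then c * coeff₂ f (k - a) (l - b) else 0 := by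
  have hmon : C c * X 0 ^ a * X 1 ^ b = monomial (single (0 : Fin 2) a + single 1 b) c := by
    rw [X_pow_eq, X_pow_eq, ← monomial_zero_eq_C_apply, monomial_mul_monomial,
      monomial_mul_monomial]
    simp
  have hle : single (0 : Fin 2) a + single 1 b ≤ single 0 k + single 1 l ↔ a ≤ k ∧ b ≤ l := by
    simp [Finsupp.le_def, Fin.forall_fin_two]
  have hsub : single (0 : Fin 2) k + single 1 l - (single 0 a + single 1 b) =
      single 0 (k - a) + single 1 (l - b) := by
    ext i; fin_cases i <;> simp
  simp only [coeff₂, hmon, mul_sub, mul_one, map_sub, coeff_mul_monomial, hle, hsub, mul_comm c]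

def minSeries [Semiring R] (g : ℕ → R) : MvPowerSeries (Fin 2) R :=
  fun d => g (min (d 0) (d 1))

def diagSeries [Semiring R] (g : ℕ → R) : MvPowerSeries (Fin 2) R :=
  fun d => if d 0 = d 1 then g (d 0) else 0

lemma coeff_minSeries [Semiring R] (g : ℕ → R) (d : Fin 2 →₀ ℕ) :
    coeff d (minSeries g) = g (min (d 0) (d 1)) :=
  rfl

@[simp]
lemma coeff₂_minSeries [Semiring R] (g : ℕ → R) (k l : ℕ) :
    coeff₂ (minSeries g) k l = g (min k l) := by
  simp [coeff₂, coeff_minSeries]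

@[simp]
lemma coeff₂_diagSeries [Semiring R] (g : ℕ → R) (k l : ℕ) :
    coeff₂ (diagSeries g) k l = if k = l then g k else 0 := by
  simp [coeff₂, diagSeries, coeff_apply]

lemma minSeries_mul_one_sub_X_mul_one_sub_X [CommRing R] (g : ℕ → R) :
    minSeries g * (1 - X 0) * (1 - X 1) = diagSeries g * (1 - X 0 * X 1) := by
  have h0 : (1 - X 0 : MvPowerSeries (Fin 2) R) = 1 - C 1 * X 0 ^ 1 * X 1 ^ 0 := by simp
  have h1 : (1 - X 1 : MvPowerSeries (Fin 2) R) = 1 - C 1 * X 0 ^ 0 * X 1 ^ 1 := by simp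
  have h01 : (1 - X 0 * X 1 : MvPowerSeries (Fin 2) R) = 1 - C 1 * X 0 ^ 1 * X 1 ^ 1 := by simp
  refine ext₂ fun k l => ?_
  rw [h0, h1, h01]
  simp only [coeff₂_mul_one_sub, coeff₂_minSeries, coeff₂_diagSeries]
  rcases k with _ | k <;> rcases l with _ | l
  · simp
  · simp
  · simp
  · rcases lt_trichotomy k l with h | rfl | h
    · simp [h, h.le, h.ne, Nat.le_succ_of_le h.le]
    · simp
    · simp [h, h.le, h.ne', Nat.le_succ_of_le h.le]

lemma diagSeries_mul_one_sub_C_mul_X_sq_mul_X_sq [CommRing R] (g : ℕ → R) (c : R)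
    (h0 : g 0 = 1) (h1 : g 1 = 0) (hrec : ∀ m, g (m + 2) = c * g m) :
    diagSeries g * (1 - C c * X 0 ^ 2 * X 1 ^ 2) = 1 := by
  refine ext₂ fun k l => ?_
  simp only [coeff₂_mul_one_sub, coeff₂_diagSeries, coeff₂_one]
  by_cases hkl : k = l
  · subst hkl
    rcases k with _ | _ | m
    · simp [h0]
    · simp [h1]
    · simp [hrec]
  · rw [if_neg hkl, if_neg (show ¬(k = 0 ∧ l = 0) by omega), zero_sub, neg_eq_zero]
    split_ifs
    · exact absurd (by omega) hkl
    all_goals simp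

end MvPowerSeries

def evenHalfPow {M : Type*} [MonoidWithZero M] (q : M) (m : ℕ) : M :=
  if Even m then q ^ (m / 2) else 0

section evenHalfPow

variable {M : Type*} [MonoidWithZero M] (q : M)

lemma evenHalfPow_zero : evenHalfPow q 0 = 1 := by simp [evenHalfPow]

lemma evenHalfPow_one : evenHalfPow q 1 = 0 := by simp [evenHalfPow]

lemma evenHalfPow_add_two (m : ℕ) : evenHalfPow q (m + 2) = q * evenHalfPow q m := by
  by_cases hm : Even m
  · simp [evenHalfPow, hm, Nat.even_add, pow_succ']
  · simp [evenHalfPow, hm, Nat.even_add]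

end evenHalfPow

lemma Real.evenHalfPow_eq_rpow (q : ℝ) (m : ℕ) :
    evenHalfPow q m = if Even m then q ^ ((m : ℝ) / 2) else 0 := by
  unfold evenHalfPow
  split_ifs with hm
  · obtain ⟨j, rfl⟩ := hm
    rw [show (j + j) / 2 = j by omega, ← Real.rpow_natCast]
    push_cast
    ring_nf
  · rfl

lemma Real.min_rpow_natCast_div_two {q : ℝ} (hq : 1 ≤ q) (k l : ℕ) :
    min (q ^ ((k : ℝ) / 2)) (q ^ ((l : ℝ) / 2)) = q ^ (((min k l : ℕ) : ℝ) / 2) :=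
  have hmono : Monotone fun n : ℕ => q ^ ((n : ℝ) / 2) := fun _ _ hmn =>
    Real.rpow_le_rpow_of_exponent_le hq (by gcongr)
  hmono.map_min.symm

/-- The Taylor coefficients of
`f(x₁,x₂) = (1 − x₁x₂)/((1 − x₁)(1 − x₂)(1 − q x₁²x₂²))` are
`a_{kl} = min(q^{k/2}, q^{l/2})` if `min(k,l)` is even and `0` otherwise;
equivalently, the power series with these coefficients times the denominator
equals the numerator. -/
theorem stmt_12 (q : ℝ) (hq : 1 ≤ q) (S : MvPowerSeries (Fin 2) ℝ)
    (hS : ∀ d : Fin 2 →₀ ℕ, MvPowerSeries.coeff d S =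
      if Even (min (d 0) (d 1)) then
        min (q ^ ((d 0 : ℝ) / 2)) (q ^ ((d 1 : ℝ) / 2)) else 0) :
    S * ((1 - MvPowerSeries.X 0) * (1 - MvPowerSeries.X 1) *
        (1 - MvPowerSeries.C q * MvPowerSeries.X 0 ^ 2 * MvPowerSeries.X 1 ^ 2)) =
      1 - MvPowerSeries.X 0 * MvPowerSeries.X 1 := by
  have hS' : S = minSeries (evenHalfPow q) := ext fun d => by
    rw [hS, Real.min_rpow_natCast_div_two hq, coeff_minSeries, Real.evenHalfPow_eq_rpow]
  rw [hS', ← mul_assoc, ← mul_assoc, minSeries_mul_one_sub_X_mul_one_sub_X, mul_right_comm,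
    diagSeries_mul_one_sub_C_mul_X_sq_mul_X_sq _ _ (evenHalfPow_zero q) (evenHalfPow_one q)
      (evenHalfPow_add_two q), one_mul]
end

section
/- The rational function f(x₁,x₂) = (1 − x₁x₂)/((1 − x₁)(1 − x₂)(1 − q x₁²x₂²)) satisfies the functional equation obtained from the A₂ Weyl group action: writing f₁⁺(x₁,x₂) = (f(x₁,x₂)+f(x₁,−x₂))/2 and f₁⁻(x₁,x₂) = (f(x₁,x₂)−f(x₁,−x₂))/2 for the even and odd parts of f in x₂, one has f(x₁,x₂) = −((1 − qx₁)/(qx₁(1 − x₁)))·f₁⁺(1/(qx₁), x₁x₂√q) + (1/(x₁√q))·f₁⁻(1/(qx₁), x₁x₂√q). -/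
set_option maxHeartbeats 2000000


/-- The `A₂` rational function
`f(x₁,x₂) = (1 − x₁x₂)/((1 − x₁)(1 − x₂)(1 − q x₁²x₂²))` is invariant under the
`|σ₁` operation: `f(x₁,x₂) = −((1 − qx₁)/(qx₁(1 − x₁)))·f₁⁺(1/(qx₁), x₁x₂√q)
 + (1/(x₁√q))·f₁⁻(1/(qx₁), x₁x₂√q)`, where `f₁⁺`, `f₁⁻` are the even and odd parts
of `f` with respect to `ε₁ : (x₁,x₂) ↦ (x₁,−x₂)`. -/
theorem stmt_13 {F : Type*} [Field F] (q sq : F) (hq : q ≠ 0) (hsq : sq ^ 2 = q)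
    (h2 : (2 : F) ≠ 0)
    (f : F → F → F)
    (hf : ∀ x₁ x₂, f x₁ x₂ = (1 - x₁ * x₂) /
      ((1 - x₁) * (1 - x₂) * (1 - q * x₁ ^ 2 * x₂ ^ 2)))
    (fplus fminus : F → F → F)
    (hfp : ∀ x₁ x₂, fplus x₁ x₂ = (f x₁ x₂ + f x₁ (-x₂)) / 2)
    (hfm : ∀ x₁ x₂, fminus x₁ x₂ = (f x₁ x₂ - f x₁ (-x₂)) / 2)
    (x₁ x₂ : F) (hx₁ : x₁ ≠ 0)
    (h1 : (1 : F) - x₁ ≠ 0) (h2' : (1 : F) - x₂ ≠ 0) (h2'' : (1 : F) + x₂ ≠ 0)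
    (h3 : (1 : F) - q * x₁ ^ 2 * x₂ ^ 2 ≠ 0)
    (h4 : q * x₁ ≠ 1)
    (h5 : (1 : F) - x₁ * x₂ * sq ≠ 0) (h6 : (1 : F) + x₁ * x₂ * sq ≠ 0) :
    f x₁ x₂ =
      -((1 - q * x₁) / (q * x₁ * (1 - x₁))) * fplus (1 / (q * x₁)) (x₁ * x₂ * sq) +
        (1 / (x₁ * sq)) * fminus (1 / (q * x₁)) (x₁ * x₂ * sq) := by
  subst hsq
  have hsq0 : sq ≠ 0 := fun h => hq (by rw [h]; ring)
  have hq4 : sq^2 * x₁ - 1 ≠ 0 := fun h => h4 (by linear_combination h)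
  have hA : f (1/(sq^2*x₁)) (x₁*x₂*sq)
      = (sq - x₂)*sq*x₁ / ((sq^2*x₁-1)*(1-x₁*x₂*sq)*((1-x₂)*(1+x₂))) := by
    rw [hf]
    rw [div_eq_div_iff]
    · field_simp
      ring
    · intro h
      have h1a : (1:F) - 1/(sq^2*x₁) ≠ 0 := by
        rw [sub_ne_zero]; intro hcon; apply hq4
        field_simp at hcon; linear_combination hcon
      have h3a : (1:F) - sq^2 * (1/(sq^2*x₁))^2 * (x₁*x₂*sq)^2 ≠ 0 := by
        have : (1:F) - sq^2 * (1/(sq^2*x₁))^2 * (x₁*x₂*sq)^2 = (1-x₂)*(1+x₂) := by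
          field_simp; ring
        rw [this]; exact mul_ne_zero h2' h2''
      exact (mul_ne_zero (mul_ne_zero h1a h5) h3a) h
    · exact mul_ne_zero (mul_ne_zero hq4 h5) (mul_ne_zero h2' h2'')
  have hB : f (1/(sq^2*x₁)) (-(x₁*x₂*sq))
      = (sq + x₂)*sq*x₁ / ((sq^2*x₁-1)*(1+x₁*x₂*sq)*((1-x₂)*(1+x₂))) := by
    rw [hf]
    rw [div_eq_div_iff]
    · field_simp
      ring
    · intro h
      have h1a : (1:F) - 1/(sq^2*x₁) ≠ 0 := by
        rw [sub_ne_zero]; intro hcon; apply hq4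
        field_simp at hcon; linear_combination hcon
      have h3a : (1:F) - sq^2 * (1/(sq^2*x₁))^2 * (-(x₁*x₂*sq))^2 ≠ 0 := by
        have : (1:F) - sq^2 * (1/(sq^2*x₁))^2 * (-(x₁*x₂*sq))^2 = (1-x₂)*(1+x₂) := by
          field_simp; ring
        rw [this]; exact mul_ne_zero h2' h2''
      have h6x : (1:F) - -(x₁*x₂*sq) ≠ 0 := by rw [sub_neg_eq_add]; exact h6
      exact (mul_ne_zero (mul_ne_zero h1a h6x) h3a) h
    · exact mul_ne_zero (mul_ne_zero hq4 h6) (mul_ne_zero h2' h2'')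
  have hP : fplus (1/(sq^2*x₁)) (x₁*x₂*sq)
      = sq^2*x₁*(1-x₁*x₂^2) /
        ((sq^2*x₁-1)*((1-x₁*x₂*sq)*(1+x₁*x₂*sq))*((1-x₂)*(1+x₂))) := by
    rw [hfp, hA, hB, div_add_div _ _ (mul_ne_zero (mul_ne_zero hq4 h5) (mul_ne_zero h2' h2''))
      (mul_ne_zero (mul_ne_zero hq4 h6) (mul_ne_zero h2' h2'')), div_div,
      div_eq_div_iff (by exact (mul_ne_zero (mul_ne_zero (mul_ne_zero (mul_ne_zero hq4 h5) (mul_ne_zero h2' h2'')) (mul_ne_zero (mul_ne_zero hq4 h6) (mul_ne_zero h2' h2''))) h2)) (by exact (mul_ne_zero (mul_ne_zero hq4 (mul_ne_zero h5 h6)) (mul_ne_zero h2' h2'')))]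
    ring
  have hM : fminus (1/(sq^2*x₁)) (x₁*x₂*sq)
      = x₂*sq*x₁ / (((1-x₁*x₂*sq)*(1+x₁*x₂*sq))*((1-x₂)*(1+x₂))) := by
    rw [hfm, hA, hB, div_sub_div _ _ (mul_ne_zero (mul_ne_zero hq4 h5) (mul_ne_zero h2' h2''))
      (mul_ne_zero (mul_ne_zero hq4 h6) (mul_ne_zero h2' h2'')), div_div,
      div_eq_div_iff (by exact (mul_ne_zero (mul_ne_zero (mul_ne_zero (mul_ne_zero hq4 h5) (mul_ne_zero h2' h2'')) (mul_ne_zero (mul_ne_zero hq4 h6) (mul_ne_zero h2' h2''))) h2)) (by exact (mul_ne_zero (mul_ne_zero h5 h6) (mul_ne_zero h2' h2'')))]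
    ring
  have hbb : (1-x₁*x₂*sq)*(1+x₁*x₂*sq) ≠ 0 := mul_ne_zero h5 h6
  have hxx : (1-x₂)*(1+x₂) ≠ 0 := mul_ne_zero h2' h2''
  have hD1 : sq^2*x₁*(1-x₁) * ((sq^2*x₁-1)*((1-x₁*x₂*sq)*(1+x₁*x₂*sq))*((1-x₂)*(1+x₂))) ≠ 0 :=
    mul_ne_zero (mul_ne_zero (mul_ne_zero hq hx₁) h1)
      (mul_ne_zero (mul_ne_zero hq4 hbb) hxx)
  have hD2 : x₁*sq * ((1-x₁*x₂*sq)*(1+x₁*x₂*sq)*((1-x₂)*(1+x₂))) ≠ 0 :=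
    mul_ne_zero (mul_ne_zero hx₁ hsq0) (mul_ne_zero hbb hxx)
  rw [hf, hP, hM, neg_mul, div_mul_div_comm, div_mul_div_comm, ← neg_div,
    div_add_div _ _ hD1 hD2,
    div_eq_div_iff (by exact mul_ne_zero (mul_ne_zero h1 h2') h3) (mul_ne_zero hD1 hD2)]
  ring
end

section
/- Suppose H is a function on r-tuples of ideals satisfying H(I₁,…,I_r)·H(I₁′,…,I_r′)·∏_{i<j adjacent} (I_i/I_j′)(I_i′/I_j) = H(I₁I₁′,…,I_rI_r′) whenever (I₁⋯I_r, I₁′⋯I_r′) = 1, and H(I,1,…,1) = 1 for all I together with H(P^{k₁},…,P^{k_r}) defined on prime powers. Then for pairwise relatively prime ideals I₁,…,I_r with each H(1,…,I_j,…,1) = 1, one has H(I₁,…,I_r) = ∏_{i<j adjacent} (I_i/I_j), where (·/·) denotes the quadratic residue symbol. -/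
open scoped Classical

/-!
Restrict the tuple `I` to a set `s` of indices (entries outside `s` replaced by `1`) and add the
indices one at a time. Since the `I i` are pairwise coprime, each new entry `I a` is coprime to the
part already built, so the twisted multiplicativity applies with `H(1,…,I a,…,1) = 1`; its twist
supplies exactly the symbols `(I i / I j)` for the adjacent pairs that have just become complete.
-/

open Finset Function

section Pairing

variable {χ : ℕ → ℕ → ℝ}

theorem pairing_one_right (hval : ∀ m n, m.Coprime n → χ m n = 1 ∨ χ m n = -1)
    (hmul_right : ∀ m a b, m.Coprime (a * b) → χ m (a * b) = χ m a * χ m b) (m : ℕ) :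
    χ m 1 = 1 := by
  have hne : χ m 1 ≠ 0 := by
    rcases hval m 1 (Nat.coprime_one_right m) with h | h <;> simp [h]
  have h := hmul_right m 1 1 (Nat.coprime_one_right m)
  rw [mul_one] at h
  exact (mul_eq_left₀ hne).1 h.symm

theorem pairing_one_left (hval : ∀ m n, m.Coprime n → χ m n = 1 ∨ χ m n = -1)
    (hmul_left : ∀ a b n, (a * b).Coprime n → χ (a * b) n = χ a n * χ b n) (n : ℕ) :
    χ 1 n = 1 := by
  have hne : χ 1 n ≠ 0 := by
    rcases hval 1 n (Nat.coprime_one_left n) with h | h <;> simp [h]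
  have h := hmul_left 1 1 n (Nat.coprime_one_left n)
  rw [mul_one] at h
  exact (mul_eq_left₀ hne).1 h.symm

theorem pairing_mul_mul_of_eq_one (hone_left : ∀ n, χ 1 n = 1) (hone_right : ∀ m, χ m 1 = 1)
    (hmul_left : ∀ a b n, (a * b).Coprime n → χ (a * b) n = χ a n * χ b n)
    (hmul_right : ∀ m a b, m.Coprime (a * b) → χ m (a * b) = χ m a * χ m b)
    {a b c d : ℕ} (h : (a * b).Coprime (c * d)) (hbd : b = 1 ∨ d = 1) :
    χ (a * b) (c * d) = χ a c * (χ a d * χ b c) := by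
  rw [hmul_left a b _ h, hmul_right a c d (Nat.Coprime.coprime_mul_right h),
    hmul_right b c d (Nat.Coprime.coprime_mul_left h)]
  rcases hbd with rfl | rfl
  · rw [hone_left d]; ring
  · rw [hone_right b]; ring

end Pairing

section MulIndicator

variable {ι : Type*} {I : ι → ℕ}

theorem coprime_mulIndicator_apply (hI : Pairwise (Nat.Coprime on I)) (s t : Set ι) {i j : ι}
    (hij : i ≠ j) : (s.mulIndicator I i).Coprime (t.mulIndicator I j) := by
  rw [Set.mulIndicator_apply, Set.mulIndicator_apply]
  split_ifs
  · exact hI hij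
  all_goals simp

theorem coprime_prod_mulIndicator [Fintype ι] (hI : Pairwise (Nat.Coprime on I)) {s t : Set ι}
    (hst : Disjoint s t) : (∏ i, s.mulIndicator I i).Coprime (∏ j, t.mulIndicator I j) := by
  refine Nat.Coprime.prod_left fun i _ => Nat.Coprime.prod_right fun j _ => ?_
  rcases eq_or_ne i j with rfl | hij
  · by_cases hi : i ∈ s
    · simp [Set.mulIndicator_of_notMem (Set.disjoint_left.1 hst hi)]
    · simp [Set.mulIndicator_of_notMem hi]
  · exact coprime_mulIndicator_apply hI s t hij

theorem apply_mulIndicator_eq_prod [Fintype ι] [DecidableEq ι] {χ : ℕ → ℕ → ℝ}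
    {H : (ι → ℕ) → ℝ} {P : Finset (ι × ι)} (hP : ∀ p ∈ P, p.1 ≠ p.2)
    (hone_left : ∀ n, χ 1 n = 1) (hone_right : ∀ m, χ m 1 = 1)
    (hmul_left : ∀ a b n, (a * b).Coprime n → χ (a * b) n = χ a n * χ b n)
    (hmul_right : ∀ m a b, m.Coprime (a * b) → χ m (a * b) = χ m a * χ m b)
    (hH : ∀ J J' : ι → ℕ, (∏ i, J i).Coprime (∏ i, J' i) →
      H J * H J' * ∏ p ∈ P, χ (J p.1) (J' p.2) * χ (J' p.1) (J p.2) = H fun i => J i * J' i)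
    (hH_one : H 1 = 1) (hI : Pairwise (Nat.Coprime on I))
    (hH_single : ∀ a, H (Pi.mulSingle a (I a)) = 1) (s : Finset ι) :
    H ((s : Set ι).mulIndicator I) =
      ∏ p ∈ P, χ ((s : Set ι).mulIndicator I p.1) ((s : Set ι).mulIndicator I p.2) := by
  induction s using Finset.induction_on with
  | empty =>
    simp only [coe_empty, Set.mulIndicator_empty, hone_left, prod_const_one]
    exact hH_one
  | insert a s ha ih =>
    have hdisj : Disjoint (s : Set ι) {a} := Set.disjoint_singleton_right.2 (by simpa using ha)
    have hunion : ((insert a s : Finset ι) : Set ι).mulIndicator I =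
        fun i => (s : Set ι).mulIndicator I i * ({a} : Set ι).mulIndicator I i := by
      rw [coe_insert, Set.insert_eq, Set.union_comm, Set.mulIndicator_union_of_disjoint hdisj]
    rw [hunion, ← hH _ _ (coprime_prod_mulIndicator hI hdisj), ih, Set.mulIndicator_singleton,
      hH_single, mul_one, ← prod_mul_distrib, ← Set.mulIndicator_singleton]
    refine prod_congr rfl fun p hp => ?_
    have hcop := coprime_mulIndicator_apply hI (insert a s : Finset ι) (insert a s : Finset ι)
      (hP p hp)
    rw [hunion] at hcop
    have hsingle :
        ({a} : Set ι).mulIndicator I p.1 = 1 ∨ ({a} : Set ι).mulIndicator I p.2 = 1 := by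
      by_cases h1 : p.1 = a
      · refine .inr (Set.mulIndicator_of_notMem ?_ I)
        exact Set.notMem_singleton_iff.2 fun h2 => hP p hp (h1.trans h2.symm)
      · exact .inl (Set.mulIndicator_of_notMem (Set.notMem_singleton_iff.2 h1) I)
    exact (pairing_mul_mul_of_eq_one hone_left hone_right hmul_left hmul_right hcop hsingle).symm

end MulIndicator

theorem stmt_17_general (r : ℕ) (hr : 0 < r) (Adj : Fin r → Fin r → Prop)
    -- the quadratic residue symbol, a bimultiplicative `±1`-valued pairing on coprime ideals
    (χ : ℕ → ℕ → ℝ)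
    (hχval : ∀ m n, Nat.Coprime m n → χ m n = 1 ∨ χ m n = -1)
    (hχmul_left : ∀ a b n, Nat.Coprime (a * b) n → χ (a * b) n = χ a n * χ b n)
    (hχmul_right : ∀ m a b, Nat.Coprime m (a * b) → χ m (a * b) = χ m a * χ m b)
    (H : (Fin r → ℕ) → ℝ)
    (hH : ∀ I I' : Fin r → ℕ, Nat.Coprime (∏ i, I i) (∏ i, I' i) →
      H I * H I' *
          ∏ p ∈ Finset.univ.filter (fun p : Fin r × Fin r => Adj p.1 p.2 ∧ p.1 < p.2),
            χ (I p.1) (I' p.2) * χ (I' p.1) (I p.2) =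
        H (fun i => I i * I' i))
    (hone : ∀ n : ℕ, H (Function.update (fun _ => 1) ⟨0, hr⟩ n) = 1)
    (I : Fin r → ℕ)
    (hcop : ∀ i j, i ≠ j → Nat.Coprime (I i) (I j))
    (hIone : ∀ j : Fin r, H (Function.update (fun _ => 1) j (I j)) = 1) :
    H I = ∏ p ∈ Finset.univ.filter (fun p : Fin r × Fin r => Adj p.1 p.2 ∧ p.1 < p.2),
      χ (I p.1) (I p.2) := by
  have hH_one : H (fun _ => 1) = 1 := by simpa using hone 1
  simpa using apply_mulIndicator_eq_prod (fun p hp => (mem_filter.1 hp).2.2.ne)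
    (pairing_one_left hχval hχmul_left) (pairing_one_right hχval hχmul_right)
    hχmul_left hχmul_right hH hH_one (fun i j => hcop i j) hIone univ

/-- If `H` satisfies the twisted multiplicativity
`H(I)·H(I′)·∏_{i<j adj} (I_i/I_j′)(I_i′/I_j) = H(I·I′)` for coprime tuples, and
`H(I,1,…,1) = 1` for all `I`, then for pairwise coprime `I₁,…,I_r` with each
`H(1,…,I_j,…,1) = 1` one has `H(I₁,…,I_r) = ∏_{i<j adj} (I_i/I_j)`. -/
theorem stmt_17 (r : ℕ) (hr : 0 < r) (Adj : Fin r → Fin r → Prop)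
    (hsymm : ∀ i j, Adj i j → Adj j i) (hirr : ∀ i, ¬Adj i i)
    -- the quadratic residue symbol, a bimultiplicative `±1`-valued pairing on coprime ideals
    (χ : ℕ → ℕ → ℝ)
    (hχval : ∀ m n, Nat.Coprime m n → χ m n = 1 ∨ χ m n = -1)
    (hχmul_left : ∀ a b n, Nat.Coprime (a * b) n → χ (a * b) n = χ a n * χ b n)
    (hχmul_right : ∀ m a b, Nat.Coprime m (a * b) → χ m (a * b) = χ m a * χ m b)
    (H : (Fin r → ℕ) → ℝ)
    (hH : ∀ I I' : Fin r → ℕ, Nat.Coprime (∏ i, I i) (∏ i, I' i) →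
      H I * H I' *
          ∏ p ∈ Finset.univ.filter (fun p : Fin r × Fin r => Adj p.1 p.2 ∧ p.1 < p.2),
            χ (I p.1) (I' p.2) * χ (I' p.1) (I p.2) =
        H (fun i => I i * I' i))
    (hone : ∀ n : ℕ, H (Function.update (fun _ => 1) ⟨0, hr⟩ n) = 1)
    (I : Fin r → ℕ) (hpos : ∀ i, 0 < I i)
    (hcop : ∀ i j, i ≠ j → Nat.Coprime (I i) (I j))
    (hIone : ∀ j : Fin r, H (Function.update (fun _ => 1) j (I j)) = 1) :
    H I = ∏ p ∈ Finset.univ.filter (fun p : Fin r × Fin r => Adj p.1 p.2 ∧ p.1 < p.2),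
      χ (I p.1) (I p.2) :=
  stmt_17_general r hr Adj χ hχval hχmul_left hχmul_right H hH hone I hcop hIone
end
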